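/- In the Solomon simultaneous-report mechanism with state α, every subgame perfect equilibrium in which the true mother a breaks challenge-stage ties by asserting α results in the outcome M_p = M_r = α, i.e., the baby is allocated to the true mother; in particular truthful revelation is the unique SPE outcome. -/

import Mathlib

inductive SolAgent | a | b
deriving DecidableEq

inductive SolOutcome | A | B | C
deriving DecidableEq

inductive SolMsg | α | β
deriving DecidableEq

open SolAgent SolOutcome SolMsg

def SolAgent.other : SolAgent → SolAgent
  | SolAgent.a => SolAgent.b
  | SolAgent.b => SolAgent.a

/-- Allocation implemented by an agreed report: A if α, B if β. -/
def outcomeOf : SolMsg → SolOutcome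
  | SolMsg.α => SolOutcome.A
  | SolMsg.β => SolOutcome.B

/-- A strategy in the two-stage SR mechanism: a first-stage report when proposer,
a first-stage report when responder, and a challenge-stage message as a function of
the responder's first-stage report. -/
structure SolStrategy where
  repP : SolMsg
  repR : SolMsg
  chal : SolMsg → SolMsg

/-- Payoff to agent `i` when the proposer is `P` with challenge strategy `chal`,
given first-stage reports `Mp` (proposer) and `Mr` (responder).  Agreement implements
the agreed allocation with no fines; disagreement fines both `F`, then if the proposer's
challenge message matches `Mr` the allocation `outcomeOf Mr` is implemented and the
responder's fine is refunded; otherwise `C` is implemented and both keep their fines. -/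
def solPayoff (u : SolAgent → SolOutcome → ℝ) (F : ℝ) (P : SolAgent)
    (chal : SolMsg → SolMsg) (i : SolAgent) (Mp Mr : SolMsg) : ℝ :=
  if Mp = Mr then u i (outcomeOf Mr)
  else if chal Mr = Mr then u i (outcomeOf Mr) - (if i = P then F else 0)
  else u i SolOutcome.C - F

/-- Subgame perfect equilibrium: for each possible proposer assignment `P`, the
proposer's challenge message is optimal in every challenge subgame, and each agent's
first-stage report is optimal given the other's report and the challenge continuation. -/
def SolSPE (u : SolAgent → SolOutcome → ℝ) (F : ℝ) (σ : SolAgent → SolStrategy) : Prop :=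
  ∀ P : SolAgent,
    (∀ Mr m : SolMsg,
      (if m = Mr then u P (outcomeOf Mr) - F else u P SolOutcome.C - F) ≤
        (if (σ P).chal Mr = Mr then u P (outcomeOf Mr) - F else u P SolOutcome.C - F)) ∧
    (∀ m : SolMsg,
      solPayoff u F P (σ P).chal P m ((σ P.other).repR) ≤
        solPayoff u F P (σ P).chal P ((σ P).repP) ((σ P.other).repR)) ∧
    (∀ m : SolMsg,
      solPayoff u F P (σ P).chal P.other ((σ P).repP) m ≤
        solPayoff u F P (σ P).chal P.other ((σ P).repP) ((σ P.other).repR))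

/-! When `a` proposes she always challenges with `α`. Against her `α`, a responder `b` reporting `β`
ends up with `C - F`, worse than the `A` of agreeing; against her `β`, `b` prefers agreeing on `B`
to reporting `α`, which only gives her `A`; and agreement on `β` leaves `a` with `B`, less than
the `C - F` she gets by reporting `α`.
When `b` proposes, subgame perfection forces her to confirm a responder's `β`, since `B` beats `C`
for her. So a responder `a` reporting `β` gets only `B`, while reporting `α` gives her `A` or
`C - F`; and `b` reporting `β` against `a`'s `α` gets at most `A - F`, instead of `A`. -/

namespace SolSPE

variable {u : SolAgent → SolOutcome → ℝ} {F : ℝ} {σ : SolAgent → SolStrategy}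

theorem chal_eq_self_of_lt (hSPE : SolSPE u F σ) {P : SolAgent} {Mr : SolMsg}
    (h : u P C < u P (outcomeOf Mr)) : (σ P).chal Mr = Mr := by
  by_contra hne
  have := (hSPE P).1 Mr Mr
  simp only [if_neg hne, if_true] at this
  linarith

theorem reports_eq_α_of_a_proposes (hSPE : SolSPE u F σ) (hF : 0 < F)
    (hFa : u a B < u a C - F) (hbAB : u b A < u b B) (hbCA : u b C ≤ u b A)
    (hachal : ∀ Mr : SolMsg, (σ a).chal Mr = α) :
    (σ a).repP = α ∧ (σ b).repR = α := by
  obtain ⟨-, hrepP, hrepR⟩ := hSPE a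
  rcases hp : (σ a).repP <;> rcases hr : (σ b).repR
  · exact ⟨rfl, rfl⟩
  · have : u b A ≤ u b C - F := by
      simpa [solPayoff, SolAgent.other, hp, hr, hachal, outcomeOf] using hrepR α
    linarith
  · have : u b B ≤ u b A := by
      simpa [solPayoff, SolAgent.other, hp, hr, hachal, outcomeOf] using hrepR β
    linarith
  · have : u a C - F ≤ u a B := by
      simpa [solPayoff, SolAgent.other, hp, hr, hachal, outcomeOf] using hrepP α
    linarith

theorem reports_eq_α_of_b_proposes (hSPE : SolSPE u F σ) (hF : 0 < F)
    (haBA : u a B < u a A) (hFa : u a B < u a C - F) (hbAB : u b A < u b B)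
    (hbCA : u b C ≤ u b A) : (σ b).repP = α ∧ (σ a).repR = α := by
  have hbchal : (σ b).chal β = β := hSPE.chal_eq_self_of_lt (hbCA.trans_lt hbAB)
  obtain ⟨-, hrepP, hrepR⟩ := hSPE b
  rcases hp : (σ b).repP <;> rcases hr : (σ a).repR
  · exact ⟨rfl, rfl⟩
  · have : u a A ≤ u a B := by
      simpa [solPayoff, SolAgent.other, hp, hr, hbchal, outcomeOf] using hrepR α
    linarith
  · have := hrepP α
    by_cases hbchal_α : (σ b).chal α = α <;>
      simp only [solPayoff, SolAgent.other, hp, hr, hbchal_α, outcomeOf, reduceCtorEq, ↓reduceIte]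
        at this <;> linarith
  · have := hrepR α
    by_cases hbchal_α : (σ b).chal α = α <;>
      simp only [solPayoff, SolAgent.other, hp, hr, hbchal_α, outcomeOf, reduceCtorEq, ↓reduceIte,
        sub_zero] at this <;> linarith

end SolSPE

theorem solomon_SPE_outcome_unique_general
    (u : SolAgent → SolOutcome → ℝ) (F : ℝ) (hF : 0 < F)
    (haAC : u SolAgent.a SolOutcome.C < u SolAgent.a SolOutcome.A)
    (hbBA : u SolAgent.b SolOutcome.A < u SolAgent.b SolOutcome.B)
    (hbAC : u SolAgent.b SolOutcome.A = u SolAgent.b SolOutcome.C)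
    (hFa : u SolAgent.a SolOutcome.B < u SolAgent.a SolOutcome.C - F)
    (σ : SolAgent → SolStrategy)
    (hSPE : SolSPE u F σ)
    -- a's challenge-stage tie-breaking: the true mother always asserts the true state α
    (hachal : ∀ Mr : SolMsg, (σ SolAgent.a).chal Mr = SolMsg.α) :
    ∀ P : SolAgent,
      (σ P).repP = SolMsg.α ∧ (σ P.other).repR = SolMsg.α ∧
        outcomeOf ((σ P.other).repR) = SolOutcome.A := by
  suffices h : ∀ P : SolAgent, (σ P).repP = α ∧ (σ P.other).repR = α from
    fun P => ⟨(h P).1, (h P).2, by rw [(h P).2]; rfl⟩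
  rintro (_ | _)
  · exact hSPE.reports_eq_α_of_a_proposes hF hFa hbBA hbAC.ge hachal
  · exact hSPE.reports_eq_α_of_b_proposes hF (by linarith) hFa hbBA hbAC.ge

/-- with state α, in every subgame perfect equilibrium in which the true
mother `a` resolves her challenge-stage behaviour by always asserting α, both first-stage
reports equal α (for either proposer assignment), so the baby is allocated to the true
mother: truthful revelation is the unique SPE outcome. -/
theorem solomon_SPE_outcome_unique
    (u : SolAgent → SolOutcome → ℝ) (F : ℝ) (hF : 0 < F)
    (haAC : u SolAgent.a SolOutcome.C < u SolAgent.a SolOutcome.A)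
    (haCB : u SolAgent.a SolOutcome.B < u SolAgent.a SolOutcome.C)
    (hbBA : u SolAgent.b SolOutcome.A < u SolAgent.b SolOutcome.B)
    (hbAC : u SolAgent.b SolOutcome.A = u SolAgent.b SolOutcome.C)
    (hFa : u SolAgent.a SolOutcome.B < u SolAgent.a SolOutcome.C - F)
    (hFb : F < u SolAgent.b SolOutcome.B - u SolAgent.b SolOutcome.A)
    (σ : SolAgent → SolStrategy)
    (hSPE : SolSPE u F σ)
    -- a's challenge-stage tie-breaking: the true mother always asserts the true state α
    (hachal : ∀ Mr : SolMsg, (σ SolAgent.a).chal Mr = SolMsg.α) :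
    ∀ P : SolAgent,
      (σ P).repP = SolMsg.α ∧ (σ P.other).repR = SolMsg.α ∧
        outcomeOf ((σ P.other).repR) = SolOutcome.A :=
  solomon_SPE_outcome_unique_general u F hF haAC hbBA hbAC hFa σ hSPE hachal
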